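/- Let μ > 0, x_r ≥ 0, let 0 < ω₁ ≤ ω₂ be real with √(x_r²·ω₂/(2μ)) < π, and define the phase delay of the diffusion system by τ_G(ω) = −arg(exp(−((x_r²/μ)·ω·I)^(1/2)))/ω for ω ∈ [ω₁, ω₂], where arg is the principal argument. Then the delay distortion R_G := (1/T₁)·((sup of τ_G over [ω₁, ω₂]) − (inf of τ_G over [ω₁, ω₂])) with T₁ = 2π/ω₁ satisfies R_G = (τ_G(ω₁) − τ_G(ω₂))/T₁ = (1/T₁)·√(x_r²/(2μ))·(1/√ω₁ − 1/√ω₂). (Proposition 1, delay distortion.) -/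

import Mathlib

/-!
For `a ≥ 0` the principal square root of `a * I` is `√(a/2) (1 + I)`, so
`G(jω) = exp (-√(x_r² ω / (2μ))) · exp (-i √(x_r² ω / (2μ)))`. As long as the imaginary part of
the exponent stays in `(-π, π]` (this is the hypothesis `√(x_r² ω₂ / (2μ)) < π`), the principal
argument is that exponent itself, and the phase delay is `τ_G ω = √(x_r² / (2μ)) / √ω`. This is
antitone in `ω`, so its supremum and infimum over `[ω₁, ω₂]` are attained at `ω₁` and `ω₂`.
-/

open Complex Real Set

namespace Complex

lemma ofReal_mul_I_cpow_half {a : ℝ} (ha : 0 ≤ a) :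
    ((a : ℂ) * I) ^ ((1 : ℂ) / 2) = √(a / 2) + √(a / 2) * I := by
  set s := √(a / 2)
  have hs : 0 ≤ s := Real.sqrt_nonneg _
  have hsq : (s : ℂ) * s = a / 2 := by
    exact_mod_cast Real.mul_self_sqrt (by positivity : 0 ≤ a / 2)
  have hw : ((s : ℂ) + s * I) ^ 2 = a * I := by
    linear_combination (2 * I) * hsq + (s : ℂ) ^ 2 * I_sq
  rw [← hw, one_div]
  exact pow_cpow_ofNat_inv (neg_pi_div_two_lt_arg_iff.2 <| .inr <| by simpa using hs)
    (arg_le_pi_div_two_iff.2 <| .inl <| by simpa using hs)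

lemma arg_exp_of_im_mem_Ioc {z : ℂ} (hz : z.im ∈ Ioc (-π) π) : arg (exp z) = z.im := by
  rwa [arg_exp, toIocMod_eq_self, show -π + 2 * π = π by ring]

end Complex

lemma neg_arg_exp_neg_cpow_half_div {a ω : ℝ} (ha : 0 ≤ a) (hω : 0 < ω)
    (hπ : √(a * ω / 2) < π) :
    -arg (exp (-(((a : ℂ) * ω * I) ^ ((1 : ℂ) / 2)))) / ω = √(a / 2) / √ω := by
  have hroot := ofReal_mul_I_cpow_half (mul_nonneg ha hω.le)
  push_cast at hroot
  set s := √(a * ω / 2) with hs_def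
  have him : (-((s : ℂ) + s * I)).im = -s := by simp
  have hs : 0 ≤ s := Real.sqrt_nonneg _
  rw [hroot, arg_exp_of_im_mem_Ioc (by rw [him]; constructor <;> linarith), him, neg_neg]
  calc s / ω = √(a / 2) * (√ω / ω) := by
        rw [hs_def, show a * ω / 2 = a / 2 * ω by ring, Real.sqrt_mul (by positivity),
          mul_div_assoc]
    _ = √(a / 2) / √ω := by rw [Real.sqrt_div_self', mul_one_div]

lemma AntitoneOn.csSup_image_Icc {α β : Type*} [Preorder α] [ConditionallyCompleteLattice β]
    {f : α → β} {a b : α} (hf : AntitoneOn f (Icc a b)) (hab : a ≤ b) :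
    sSup (f '' Icc a b) = f a :=
  (hf.map_isLeast (isLeast_Icc hab)).csSup_eq

lemma AntitoneOn.csInf_image_Icc {α β : Type*} [Preorder α] [ConditionallyCompleteLattice β]
    {f : α → β} {a b : α} (hf : AntitoneOn f (Icc a b)) (hab : a ≤ b) :
    sInf (f '' Icc a b) = f b :=
  (hf.map_isGreatest (isGreatest_Icc hab)).csInf_eq

lemma antitoneOn_div_sqrt {c : ℝ} (hc : 0 ≤ c) : AntitoneOn (fun ω ↦ c / √ω) (Ioi 0) :=
  fun _ hx _ _ hxy ↦ div_le_div_of_nonneg_left hc (Real.sqrt_pos.2 hx) (Real.sqrt_le_sqrt hxy)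

theorem diffusion_delay_distortion_general (μ x_r : ℝ) (hμ : 0 < μ)
    (ω₁ ω₂ : ℝ) (hω₁ : 0 < ω₁) (h12 : ω₁ ≤ ω₂)
    (hπ : Real.sqrt (x_r ^ 2 * ω₂ / (2 * μ)) < Real.pi)
    (T₁ : ℝ)
    (τ_G : ℝ → ℝ)
    (hτ : ∀ ω ∈ Set.Icc ω₁ ω₂, τ_G ω =
      -(Complex.arg (Complex.exp
        (-((((x_r ^ 2 / μ) : ℝ) * (ω : ℝ) * Complex.I) ^ ((1 : ℂ) / 2))))) / ω) :
    (1 / T₁) * (sSup (τ_G '' Set.Icc ω₁ ω₂) - sInf (τ_G '' Set.Icc ω₁ ω₂)) =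
      (τ_G ω₁ - τ_G ω₂) / T₁ ∧
    (τ_G ω₁ - τ_G ω₂) / T₁ =
      (1 / T₁) * Real.sqrt (x_r ^ 2 / (2 * μ)) *
        (1 / Real.sqrt ω₁ - 1 / Real.sqrt ω₂) := by
  set c := √(x_r ^ 2 / (2 * μ))
  have hτc : EqOn τ_G (fun ω ↦ c / √ω) (Icc ω₁ ω₂) := fun ω hω ↦ by
    have hωπ : √(x_r ^ 2 / μ * ω / 2) < π := by
      refine lt_of_le_of_lt (Real.sqrt_le_sqrt ?_) hπ
      rw [div_mul_eq_mul_div, div_div, mul_comm μ]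
      gcongr
      exact hω.2
    rw [hτ ω hω, neg_arg_exp_neg_cpow_half_div (by positivity) (hω₁.trans_le hω.1) hωπ, div_div,
      mul_comm μ]
  have hanti : AntitoneOn (fun ω ↦ c / √ω) (Icc ω₁ ω₂) :=
    (antitoneOn_div_sqrt (Real.sqrt_nonneg _)).mono fun ω hω ↦ hω₁.trans_le hω.1
  rw [hτc.image_eq, hanti.csSup_image_Icc h12, hanti.csInf_image_Icc h12,
    hτc ⟨le_rfl, h12⟩, hτc ⟨h12, le_rfl⟩]
  constructor <;> ring

theorem diffusion_delay_distortion (μ x_r : ℝ) (hμ : 0 < μ) (hx : 0 ≤ x_r)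
    (ω₁ ω₂ : ℝ) (hω₁ : 0 < ω₁) (h12 : ω₁ ≤ ω₂)
    (hπ : Real.sqrt (x_r ^ 2 * ω₂ / (2 * μ)) < Real.pi)
    (T₁ : ℝ) (hT₁ : T₁ = 2 * Real.pi / ω₁)
    (τ_G : ℝ → ℝ)
    (hτ : ∀ ω ∈ Set.Icc ω₁ ω₂, τ_G ω =
      -(Complex.arg (Complex.exp
        (-((((x_r ^ 2 / μ) : ℝ) * (ω : ℝ) * Complex.I) ^ ((1 : ℂ) / 2))))) / ω) :
    (1 / T₁) * (sSup (τ_G '' Set.Icc ω₁ ω₂) - sInf (τ_G '' Set.Icc ω₁ ω₂)) =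
      (τ_G ω₁ - τ_G ω₂) / T₁ ∧
    (τ_G ω₁ - τ_G ω₂) / T₁ =
      (1 / T₁) * Real.sqrt (x_r ^ 2 / (2 * μ)) *
        (1 / Real.sqrt ω₁ - 1 / Real.sqrt ω₂) :=
  diffusion_delay_distortion_general μ x_r hμ ω₁ ω₂ hω₁ h12 hπ T₁ τ_G hτ
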